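/- There exists an absolute constant C > 0 such that for every integer p ≥ 2 the following holds. Let τ_β = cos(π(2β+1)/(2p)) for β = 0, …, p−1 be the Chebyshev nodes on [−1,1], and let L_β be the corresponding Lagrange basis polynomials of degree p−1 (so L_β(τ_{β'}) = δ_{β,β'}). Then for every f ∈ ℝ^p, ∫_{−1}^{1} (Σ_{β=0}^{p−1} f_β L_β(t))² dt ≤ C · p · log(p) · ‖f‖₂². -/

import Mathlib

open scoped BigOperators

/-- The Chebyshev nodes `τ_β = cos(π(2β+1)/(2p))` on `[-1,1]`. -/
noncomputable def chebNode (p : ℕ) (β : Fin p) : ℝ :=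
  Real.cos (Real.pi * (2 * ((β : ℕ) : ℝ) + 1) / (2 * (p : ℝ)))

/-- The Lagrange basis polynomial `L_β(t) = Π_{β'≠β} (t − τ_{β'})/(τ_β − τ_{β'})`
for the Chebyshev nodes. -/
noncomputable def chebLagrange (p : ℕ) (β : Fin p) (t : ℝ) : ℝ :=
  ∏ β' ∈ Finset.univ.filter fun β' => β' ≠ β,
    (t - chebNode p β') / (chebNode p β - chebNode p β')

/-!
Let `T = T_p`, whose zeros are the nodes `τ_β = cos θ_β`. Lagrange interpolation gives
`T(t) = T'(τ_β) (t - τ_β) L_β(t)`, and `T'(τ_β) sin θ_β = ± p`, so `|T'(τ_β)| ≥ p`. Since `|T| ≤ 1`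
and, by Markov's inequality, `|T(t)| ≤ p² |t - τ_β|` on `[-1, 1]`, this yields
`L_β(t)² ≤ 2p² / (1 + p⁴ (t - τ_β)²)`, whose integral over `[-1, 1]` is at most `2π`.
Cauchy–Schwarz then bounds the integral of `(∑ f_β L_β)²` by `2π p ‖f‖²`, which is at most
`(2π / log 2) p log p ‖f‖²` for `p ≥ 2`.
-/

open Polynomial Real Polynomial.Chebyshev

namespace Lagrange

variable {F ι : Type*} [Field F] [DecidableEq ι] {s : Finset ι} {v : ι → F} {i : ι}

theorem eval_nodal_eq_mul_eval_basis (hvs : Set.InjOn v s) (hi : i ∈ s) (x : F) :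
    (nodal s v).eval x =
      (derivative (nodal s v)).eval (v i) * (x - v i) * (Lagrange.basis s v i).eval x := by
  have hw : (derivative (nodal s v)).eval (v i) ≠ 0 := by
    simpa [nodalWeight_eq_eval_derivative_nodal hi] using nodalWeight_ne_zero hvs hi
  conv_lhs => rw [nodal_eq_mul_nodal_erase hi]
  rw [basis_eq_prod_sub_inv_mul_nodal_div hi, ← nodal_erase_eq_nodal_div hi,
    nodalWeight_eq_eval_derivative_nodal hi]
  simp only [eval_mul, eval_C, eval_sub, eval_X]
  field_simp

end Lagrange

namespace Polynomial.Chebyshev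

theorem derivative_T_real_eval_cos_mul_sin (n : ℤ) (θ : ℝ) :
    (derivative (T ℝ n)).eval (cos θ) * sin θ = n * sin (n * θ) := by
  rw [T_derivative_eq_U, eval_mul, eval_intCast, mul_assoc, U_real_cos]
  push_cast
  ring_nf

theorem abs_derivative_T_real_eval_le (n : ℤ) {x : ℝ} (hx : |x| ≤ 1) :
    |(derivative (T ℝ n)).eval x| ≤ n ^ 2 := by
  simpa [derivative_T_eval_one] using abs_iterate_derivative_T_real_le n 1 hx

theorem abs_eval_T_real_sub_le (n : ℤ) {x y : ℝ} (hx : x ∈ Set.Icc (-1) 1)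
    (hy : y ∈ Set.Icc (-1) 1) :
    |(T ℝ n).eval y - (T ℝ n).eval x| ≤ n ^ 2 * |y - x| := by
  refine (convex_Icc (-1 : ℝ) 1).norm_image_sub_le_of_norm_deriv_le
    (fun z _ => (T ℝ n).differentiableAt) (fun z hz => ?_) hx hy
  rw [Polynomial.deriv, Real.norm_eq_abs]
  exact abs_derivative_T_real_eval_le n (abs_le.mpr hz)

end Polynomial.Chebyshev

noncomputable def chebAngle (p : ℕ) (β : Fin p) : ℝ :=
  π * (2 * ((β : ℕ) : ℝ) + 1) / (2 * (p : ℝ))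

theorem cos_chebAngle (p : ℕ) (β : Fin p) : cos (chebAngle p β) = chebNode p β := rfl

theorem chebAngle_mem_Icc (p : ℕ) (β : Fin p) : chebAngle p β ∈ Set.Icc 0 π := by
  have hβ : ((β : ℕ) : ℝ) + 1 ≤ p := by exact_mod_cast β.isLt
  have hp : (0 : ℝ) < p := by linarith [(β : ℕ).cast_nonneg (α := ℝ)]
  unfold chebAngle
  constructor
  · positivity
  · rw [div_le_iff₀ (by positivity)]
    nlinarith [pi_pos]

theorem chebAngle_injective (p : ℕ) : Function.Injective (chebAngle p) := by
  intro β β' h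
  have hp : (0 : ℝ) < p := by exact_mod_cast β.pos
  unfold chebAngle at h
  field_simp at h
  exact Fin.ext (by exact_mod_cast (by linarith : ((β : ℕ) : ℝ) = β'))

theorem chebNode_injective (p : ℕ) : Function.Injective (chebNode p) := fun β β' h =>
  chebAngle_injective p (injOn_cos (chebAngle_mem_Icc p β) (chebAngle_mem_Icc p β') h)

theorem chebNode_mem_Icc (p : ℕ) (β : Fin p) : chebNode p β ∈ Set.Icc (-1) 1 :=
  ⟨neg_one_le_cos _, cos_le_one _⟩

theorem cos_natCast_mul_chebAngle (p : ℕ) (β : Fin p) : cos (p * chebAngle p β) = 0 := by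
  have hp : (p : ℝ) ≠ 0 := by exact_mod_cast β.pos.ne'
  rw [cos_eq_zero_iff]
  exact ⟨β, by unfold chebAngle; field_simp; push_cast; ring⟩

theorem eval_T_chebNode (p : ℕ) (β : Fin p) : (T ℝ p).eval (chebNode p β) = 0 := by
  rw [← cos_chebAngle, T_real_cos, Int.cast_natCast, cos_natCast_mul_chebAngle]

theorem natCast_le_abs_derivative_T_eval_chebNode (p : ℕ) (β : Fin p) :
    (p : ℝ) ≤ |(derivative (T ℝ p)).eval (chebNode p β)| := by
  have h := derivative_T_real_eval_cos_mul_sin p (chebAngle p β)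
  have hsin : |sin (p * chebAngle p β)| = 1 := by
    have := sin_sq_add_cos_sq (p * chebAngle p β)
    rw [cos_natCast_mul_chebAngle] at this
    rw [← abs_one, ← sq_eq_sq_iff_abs_eq_abs]
    linarith
  rw [Int.cast_natCast, cos_chebAngle] at h
  calc (p : ℝ) = |(derivative (T ℝ p)).eval (chebNode p β)| * |sin (chebAngle p β)| := by
        rw [← abs_mul, h, abs_mul, hsin, Nat.abs_cast, mul_one]
    _ ≤ |(derivative (T ℝ p)).eval (chebNode p β)| :=
        mul_le_of_le_one_right (abs_nonneg _) (abs_sin_le_one _)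

theorem T_eq_C_mul_nodal_chebNode (p : ℕ) :
    T ℝ p = C (2 ^ (p - 1)) * Lagrange.nodal Finset.univ (chebNode p) := by
  refine eq_of_degree_le_of_eval_index_eq Finset.univ (chebNode_injective p).injOn ?_ ?_ ?_ ?_
  · simp
  · rw [degree_C_mul (by positivity), Lagrange.degree_nodal]
    simp
  · rw [leadingCoeff_C_mul_of_isUnit, Lagrange.nodal_monic.leadingCoeff]
    · simp
    · exact IsUnit.mk0 _ (by positivity)
  · intro β _
    rw [eval_T_chebNode, eval_mul, Lagrange.eval_nodal_at_node (Finset.mem_univ β), mul_zero]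

theorem chebLagrange_eq_eval_basis (p : ℕ) (β : Fin p) (t : ℝ) :
    chebLagrange p β t = (Lagrange.basis Finset.univ (chebNode p) β).eval t := by
  simp only [chebLagrange, Lagrange.basis, Lagrange.basisDivisor, eval_prod, eval_mul, eval_C,
    eval_sub, eval_X, Finset.filter_ne', div_eq_inv_mul]

theorem continuous_chebLagrange (p : ℕ) (β : Fin p) : Continuous (chebLagrange p β) := by
  simpa only [funext (chebLagrange_eq_eval_basis p β)] using Polynomial.continuous _

theorem chebLagrange_chebNode_self (p : ℕ) (β : Fin p) : chebLagrange p β (chebNode p β) = 1 := by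
  rw [chebLagrange_eq_eval_basis,
    Lagrange.eval_basis_self (chebNode_injective p).injOn (Finset.mem_univ β)]

theorem eval_T_eq_mul_chebLagrange (p : ℕ) (β : Fin p) (t : ℝ) :
    (T ℝ p).eval t =
      (derivative (T ℝ p)).eval (chebNode p β) * (t - chebNode p β) * chebLagrange p β t := by
  rw [chebLagrange_eq_eval_basis, T_eq_C_mul_nodal_chebNode, derivative_C_mul, eval_mul,
    eval_mul, eval_C, eval_C, Lagrange.eval_nodal_eq_mul_eval_basis (chebNode_injective p).injOn
      (Finset.mem_univ β)]
  ring

theorem chebLagrange_sq_mul_le (p : ℕ) (β : Fin p) {t : ℝ} (ht : t ∈ Set.Icc (-1) 1) :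
    chebLagrange p β t ^ 2 * (1 + (p ^ 2 * (t - chebNode p β)) ^ 2) ≤ 2 * p ^ 2 := by
  have hp : (1 : ℝ) ≤ p := by exact_mod_cast β.pos
  rcases eq_or_ne t (chebNode p β) with rfl | hu
  · rw [chebLagrange_chebNode_self, sub_self]
    nlinarith
  set L := chebLagrange p β t
  set u := t - chebNode p β
  set D := (derivative (T ℝ p)).eval (chebNode p β)
  have hu : 0 < u ^ 2 := by positivity [sub_ne_zero.mpr hu]
  have hT : (T ℝ p).eval t = D * u * L := eval_T_eq_mul_chebLagrange p β t
  have hD : (p : ℝ) ^ 2 ≤ D ^ 2 := by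
    simpa using sq_le_sq.mpr (by simpa using natCast_le_abs_derivative_T_eval_chebNode p β)
  have hT₁ : ((T ℝ p).eval t) ^ 2 ≤ 1 := by
    simpa using sq_le_sq.mpr ((abs_eval_T_real_le_one p (abs_le.mpr ht)).trans_eq abs_one.symm)
  have hT₂ : ((T ℝ p).eval t) ^ 2 ≤ (p ^ 2 * u) ^ 2 := by
    have := abs_eval_T_real_sub_le p (chebNode_mem_Icc p β) ht
    rw [eval_T_chebNode, sub_zero] at this
    exact sq_le_sq.mpr (by simpa [abs_mul] using this)
  have hQ : p ^ 2 * (u ^ 2 * L ^ 2) ≤ ((T ℝ p).eval t) ^ 2 :=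
    calc p ^ 2 * (u ^ 2 * L ^ 2) ≤ D ^ 2 * (u ^ 2 * L ^ 2) := by gcongr
      _ = ((T ℝ p).eval t) ^ 2 := by rw [hT]; ring
  have hL₁ : L ^ 2 ≤ p ^ 2 :=
    le_of_mul_le_mul_right (by linear_combination hQ + hT₂ : L ^ 2 * (p ^ 2 * u ^ 2) ≤
      p ^ 2 * (p ^ 2 * u ^ 2)) (by positivity)
  have hL₂ : L ^ 2 * (p ^ 2 * u) ^ 2 ≤ p ^ 2 := by
    linear_combination (p : ℝ) ^ 2 * (hQ + hT₁)
  calc L ^ 2 * (1 + ((p : ℝ) ^ 2 * u) ^ 2) = L ^ 2 + L ^ 2 * (p ^ 2 * u) ^ 2 := by ring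
    _ ≤ 2 * (p : ℝ) ^ 2 := by linarith

theorem integral_inv_one_add_mul_sub_sq_le {a : ℝ} (ha : 0 < a) (c x y : ℝ) :
    ∫ t in x..y, (1 + (a * (t - c)) ^ 2)⁻¹ ≤ π / a := by
  simp_rw [mul_sub]
  rw [intervalIntegral.integral_comp_mul_sub (fun t => (1 + t ^ 2)⁻¹) ha.ne', smul_eq_mul,
    integral_inv_one_add_sq, inv_mul_eq_div]
  gcongr
  linarith [arctan_lt_pi_div_two (a * y - a * c), neg_pi_div_two_lt_arctan (a * x - a * c)]

theorem integral_chebLagrange_sq_le (p : ℕ) (β : Fin p) :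
    ∫ t in (-1 : ℝ)..1, chebLagrange p β t ^ 2 ≤ 2 * π := by
  have hp : (0 : ℝ) < p := by exact_mod_cast β.pos
  set g : ℝ → ℝ := fun t => 2 * (p : ℝ) ^ 2 * (1 + (p ^ 2 * (t - chebNode p β)) ^ 2)⁻¹
  have hg : Continuous g :=
    continuous_const.mul ((by fun_prop : Continuous fun t => _).inv₀ fun t => by positivity)
  have hbound : ∀ t ∈ Set.Icc (-1 : ℝ) 1, chebLagrange p β t ^ 2 ≤ g t := fun t ht =>
    ((le_div_iff₀ (by positivity)).mpr (chebLagrange_sq_mul_le p β ht)).trans_eq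
      (div_eq_mul_inv _ _)
  calc ∫ t in (-1 : ℝ)..1, chebLagrange p β t ^ 2
      ≤ ∫ t in (-1 : ℝ)..1, g t :=
        intervalIntegral.integral_mono_on (by norm_num)
          (((continuous_chebLagrange p β).pow 2).intervalIntegrable _ _)
          (hg.intervalIntegrable _ _) hbound
    _ ≤ 2 * p ^ 2 * (π / p ^ 2) := by
        rw [intervalIntegral.integral_const_mul]
        gcongr
        exact integral_inv_one_add_mul_sub_sq_le (by positivity) _ _ _
    _ = 2 * π := by field_simp

theorem integral_sq_sum_mul_le {ι : Type*} [Fintype ι] (f : ι → ℝ) {g : ι → ℝ → ℝ}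
    (hg : ∀ i, Continuous (g i)) {a b : ℝ} (hab : a ≤ b) :
    ∫ t in a..b, (∑ i, f i * g i t) ^ 2 ≤ (∑ i, f i ^ 2) * ∑ i, ∫ t in a..b, g i t ^ 2 := by
  rw [← intervalIntegral.integral_finsetSum (f := fun i t => g i t ^ 2) fun i _ =>
    ((hg i).pow 2).intervalIntegrable a b,
    ← intervalIntegral.integral_const_mul]
  refine intervalIntegral.integral_mono_on hab (Continuous.intervalIntegrable (by fun_prop) a b)
    (Continuous.intervalIntegrable (by fun_prop) a b) fun t _ => ?_
  exact Finset.sum_mul_sq_le_sq_mul_sq _ f fun i => g i t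

/-- There is an absolute constant `C > 0` such that for all `p ≥ 2`
and all `f ∈ ℝ^p`, the Chebyshev–Lagrange interpolant satisfies
`∫_{−1}^{1} (Σ_β f_β L_β(t))² dt ≤ C p log p ‖f‖₂²`. -/
theorem chebLagrange_L2_bound :
    ∃ C : ℝ, 0 < C ∧
      ∀ (p : ℕ), 2 ≤ p → ∀ f : Fin p → ℝ,
        (∫ t in (-1 : ℝ)..1, (∑ β, f β * chebLagrange p β t) ^ 2) ≤
          C * (p : ℝ) * Real.log p * ∑ β, f β ^ 2 := by
  refine ⟨2 * π / log 2, by positivity, fun p hp f => ?_⟩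
  have hlog : log 2 ≤ log p := log_le_log (by norm_num) (by exact_mod_cast hp)
  calc (∫ t in (-1 : ℝ)..1, (∑ β, f β * chebLagrange p β t) ^ 2)
      ≤ (∑ β, f β ^ 2) * ∑ β, ∫ t in (-1 : ℝ)..1, chebLagrange p β t ^ 2 :=
        integral_sq_sum_mul_le f (continuous_chebLagrange p) (by norm_num)
    _ ≤ (∑ β, f β ^ 2) * ∑ _β : Fin p, 2 * π := by
        gcongr with β
        exact integral_chebLagrange_sq_le p β
    _ = 2 * π / log 2 * p * log 2 * ∑ β, f β ^ 2 := by
        rw [Finset.sum_const, Finset.card_univ, Fintype.card_fin, nsmul_eq_mul]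
        field_simp
    _ ≤ 2 * π / log 2 * p * log p * ∑ β, f β ^ 2 := by gcongr
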